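/- arXiv:2107.07853 — 2 statements merged into one kernel-verified Lean document; each statement's English description precedes it below -/
import Mathlib

section
/- Let 𝒜 be a set of actions containing a distinguished null action c, let U be a nonempty set of individuals (exogenous contexts), and for each action a ∈ 𝒜 and individual u ∈ U let x a u ∈ σ denote the post-action feature values of the stable variable set S and y a u ∈ τ the post-action target value. Assume invariance of the conditional mechanism: there exists a function g : σ → τ such that for every action a ∈ 𝒜 and every u ∈ U, y a u = g (x a u). Assume the predictor f : σ → τ is perfect in the pre-recourse (null-action) distribution: for every u ∈ U, f (x c u) = y c u. Then for every action a ∈ 𝒜 and every individual u ∈ U whose post-action features lie in the support of the pre-recourse distribution, i.e. x a u ∈ Set.range (x c), the predictor remains perfect: f (x a u) = y a u. -/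
/-- Deterministic core of Proposition 2: if the conditional mechanism is invariant
(a single function `g` generates the target from the stable features under every action)
and the predictor `f` is perfect under the null action `c`, then `f` remains perfect
for any action `a` and individual `u` whose post-action features lie in the support
(range) of the pre-recourse feature distribution. -/
theorem meaningful_recourse_perfect_prediction
    {A U σ τ : Type*} [Nonempty U] (c : A)
    (x : A → U → σ) (y : A → U → τ) (f : σ → τ)
    (hinv : ∃ g : σ → τ, ∀ (a : A) (u : U), y a u = g (x a u))
    (hperf : ∀ u : U, f (x c u) = y c u) :
    ∀ (a : A) (u : U), x a u ∈ Set.range (x c) → f (x a u) = y a u := by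
  obtain ⟨g, hg⟩ := hinv
  rintro a u ⟨v, hv⟩
  rw [← hv, hperf v, hg c v, hg a u, ← hv]
end

section
/- Let Ω be a measurable space, let E and F be standard Borel spaces, let X : Ω → E and Y : Ω → F be measurable, and let μ and ν be probability measures on Ω (the pre-recourse and post-intervention distributions). Assume: (i) invariance of the conditional distribution, i.e. the conditional distribution kernel of Y given X under ν agrees with the one under μ, ν-almost everywhere in X (condDistrib Y X ν x = condDistrib Y X μ x for (ν.map X)-almost every x); (ii) the pushforward ν.map X is absolutely continuous with respect to μ.map X; and (iii) there is a measurable f : E → F with Y = f ∘ X μ-almost surely. Then Y = f ∘ X ν-almost surely. -/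
open MeasureTheory ProbabilityTheory

/-! Disintegrating the joint law of `(X, Y)` as `μ.map X ⊗ₘ condDistrib Y X μ` turns an almost
sure property of `(X, Y)` into a property of the conditional distribution holding for almost every
value of `X`. Invariance of the conditional distribution and absolute continuity of the feature
laws carry such a property from `μ` to `ν`; perfect prediction is the property `Y = f X`. -/

section ConditionalDistribution

variable {Ω E F : Type*} [MeasurableSpace Ω] [MeasurableSpace E]
  [MeasurableSpace F] [StandardBorelSpace F] [Nonempty F] {X : Ω → E} {Y : Ω → F}

theorem ae_iff_ae_condDistrib {μ : Measure Ω} [IsFiniteMeasure μ]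
    (hX : AEMeasurable X μ) (hY : AEMeasurable Y μ) {p : E × F → Prop}
    (hp : MeasurableSet {z | p z}) :
    (∀ᵐ ω ∂μ, p (X ω, Y ω)) ↔ ∀ᵐ x ∂μ.map X, ∀ᵐ y ∂condDistrib Y X μ x, p (x, y) := by
  rw [← ae_map_iff (hX.prodMk hY) hp, ← compProd_map_condDistrib hY, Measure.ae_compProd_iff hp]

theorem ae_of_condDistrib_ae_eq_of_absolutelyContinuous {μ ν : Measure Ω}
    [IsFiniteMeasure μ] [IsFiniteMeasure ν] (hX : Measurable X) (hY : Measurable Y)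
    (hinv : ∀ᵐ x ∂ν.map X, condDistrib Y X ν x = condDistrib Y X μ x)
    (hac : ν.map X ≪ μ.map X) {p : E × F → Prop} (hp : MeasurableSet {z | p z})
    (hμ : ∀ᵐ ω ∂μ, p (X ω, Y ω)) : ∀ᵐ ω ∂ν, p (X ω, Y ω) := by
  rw [ae_iff_ae_condDistrib hX.aemeasurable hY.aemeasurable hp] at hμ ⊢
  filter_upwards [hac.ae_le hμ, hinv] with x hx heq
  rwa [heq]

end ConditionalDistribution

theorem perfect_prediction_transfers_to_interventional_general
    {Ω E F : Type*} [MeasurableSpace Ω]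
    [MeasurableSpace E]
    [MeasurableSpace F] [StandardBorelSpace F] [Nonempty F]
    (X : Ω → E) (Y : Ω → F) (hX : Measurable X) (hY : Measurable Y)
    (μ ν : Measure Ω) [IsProbabilityMeasure μ] [IsProbabilityMeasure ν]
    (hinv : ∀ᵐ x ∂(ν.map X), condDistrib Y X ν x = condDistrib Y X μ x)
    (hac : ν.map X ≪ μ.map X)
    (f : E → F) (hf : Measurable f)
    (hμ : Y =ᵐ[μ] f ∘ X) :
    Y =ᵐ[ν] f ∘ X :=
  ae_of_condDistrib_ae_eq_of_absolutelyContinuous (p := fun z ↦ z.2 = f z.1) hX hY hinv hac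
    (measurableSet_eq_fun measurable_snd (hf.comp measurable_fst)) hμ

/-- Measure-theoretic form of Proposition 2: if the regular conditional distribution of
the target `Y` given the features `X` is invariant between the pre-recourse distribution
`μ` and the post-intervention distribution `ν` (a.e. in the feature marginal of `ν`),
the feature marginal of `ν` is absolutely continuous w.r.t. that of `μ` (no
extrapolation), and a measurable predictor `f` satisfies `Y = f ∘ X` μ-a.s., then
`Y = f ∘ X` ν-a.s. as well. -/
theorem perfect_prediction_transfers_to_interventional
    {Ω E F : Type*} [MeasurableSpace Ω]
    [MeasurableSpace E] [StandardBorelSpace E]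
    [MeasurableSpace F] [StandardBorelSpace F] [Nonempty F]
    (X : Ω → E) (Y : Ω → F) (hX : Measurable X) (hY : Measurable Y)
    (μ ν : Measure Ω) [IsProbabilityMeasure μ] [IsProbabilityMeasure ν]
    (hinv : ∀ᵐ x ∂(ν.map X), condDistrib Y X ν x = condDistrib Y X μ x)
    (hac : ν.map X ≪ μ.map X)
    (f : E → F) (hf : Measurable f)
    (hμ : Y =ᵐ[μ] f ∘ X) :
    Y =ᵐ[ν] f ∘ X :=
  perfect_prediction_transfers_to_interventional_general X Y hX hY μ ν hinv hac f hf hμ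
end
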